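/- For ρ > 1 and κ = √(ρ²-1), integrating by parts the derivative d/dt [ t·(ρ² + κ²t²)^{-1/2}·artanh((ρ² + κ²t²)^{-1/2}) ] yields ∫₀^∞ (ρ²+κ²t²)^{-3/2} artanh((ρ²+κ²t²)^{-1/2}) dt = (1/ρ²)∫₀^∞ t²/((1+t²)(ρ² + κ²t²)) dt. -/

import Mathlib

open Real MeasureTheory

/-- The inverse hyperbolic tangent. -/
noncomputable def artanh (x : ℝ) : ℝ := (1 / 2) * Real.log ((1 + x) / (1 - x))

lemma hasDerivAt_artanh {x : ℝ} (h1 : -1 < x) (h2 : x < 1) :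
    HasDerivAt _root_.artanh (1 / (1 - x ^ 2)) x := by
  have h1' : (0:ℝ) < 1 + x := by linarith
  have h2' : (0:ℝ) < 1 - x := by linarith
  have ha : HasDerivAt (fun y : ℝ => 1 + y) 1 x := by
    simpa using (hasDerivAt_id x).const_add 1
  have hb : HasDerivAt (fun y : ℝ => 1 - y) (-1) x := by
    simpa using (hasDerivAt_id x).const_sub 1
  have hd : HasDerivAt (fun y : ℝ => (1 + y) / (1 - y))
      ((1 * (1 - x) - (1 + x) * (-1)) / (1 - x) ^ 2) x := ha.div hb h2'.ne'
  have hpos : (0:ℝ) < (1 + x) / (1 - x) := div_pos h1' h2'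
  have hlog := (Real.hasDerivAt_log hpos.ne').comp x hd
  have := hlog.const_mul (1/2 : ℝ)
  have hx2 : 1 - x ^ 2 ≠ 0 := by nlinarith
  refine this.congr_deriv ?_
  field_simp
  ring

lemma main_hasDerivAt (ρ κ : ℝ) (hρ : 1 < ρ) (hκ2 : κ ^ 2 = ρ ^ 2 - 1) (t : ℝ) :
    HasDerivAt (fun u : ℝ => u * (Real.sqrt (ρ ^ 2 + κ ^ 2 * u ^ 2))⁻¹ *
        _root_.artanh ((Real.sqrt (ρ ^ 2 + κ ^ 2 * u ^ 2))⁻¹))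
      (ρ ^ 2 * ((1 / Real.sqrt (ρ ^ 2 + κ ^ 2 * t ^ 2) ^ 3) *
          _root_.artanh (1 / Real.sqrt (ρ ^ 2 + κ ^ 2 * t ^ 2)))
        - t ^ 2 / ((1 + t ^ 2) * (ρ ^ 2 + κ ^ 2 * t ^ 2))) t := by
  have hq : 0 < ρ ^ 2 + κ ^ 2 * t ^ 2 := by nlinarith [sq_nonneg (κ * t)]
  set s := Real.sqrt (ρ ^ 2 + κ ^ 2 * t ^ 2) with hs_def
  have hs0 : 0 ≤ s := Real.sqrt_nonneg _
  have hs2 : s ^ 2 = ρ ^ 2 + κ ^ 2 * t ^ 2 := Real.sq_sqrt hq.le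
  have hs1 : 1 < s := by nlinarith [sq_nonneg (κ * t)]
  have hsne : s ≠ 0 := by positivity
  have hq' : HasDerivAt (fun u : ℝ => ρ ^ 2 + κ ^ 2 * u ^ 2) (κ ^ 2 * (2 * t)) t := by
    simpa using ((hasDerivAt_pow 2 t).const_mul (κ ^ 2)).const_add (ρ ^ 2)
  have hs' : HasDerivAt (fun u : ℝ => Real.sqrt (ρ ^ 2 + κ ^ 2 * u ^ 2))
      (1 / (2 * s) * (κ ^ 2 * (2 * t))) t := by
    exact (Real.hasDerivAt_sqrt hq.ne').comp t hq'
  have hg' : HasDerivAt (fun u : ℝ => (Real.sqrt (ρ ^ 2 + κ ^ 2 * u ^ 2))⁻¹)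
      (-(1 / (2 * s) * (κ ^ 2 * (2 * t))) / s ^ 2) t := hs'.inv hsne
  have hsinv1 : s⁻¹ < 1 := by
    rw [inv_lt_one_iff₀]; right; exact hs1
  have hx1 : (-1 : ℝ) < s⁻¹ := by
    have : (0:ℝ) < s⁻¹ := by positivity
    linarith
  have hA' : HasDerivAt (fun u : ℝ => _root_.artanh ((Real.sqrt (ρ ^ 2 + κ ^ 2 * u ^ 2))⁻¹))
      (1 / (1 - (s⁻¹) ^ 2) * (-(1 / (2 * s) * (κ ^ 2 * (2 * t))) / s ^ 2)) t :=
    HasDerivAt.comp (h₂ := _root_.artanh) t (hasDerivAt_artanh hx1 hsinv1) hg'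
  have hF := ((hasDerivAt_id t).mul hg').mul hA'
  refine hF.congr_deriv ?_; symm
  simp only [← hs_def, id_eq, one_div, Pi.mul_apply]
  have h1 : (1 : ℝ) - (s⁻¹) ^ 2 ≠ 0 := by
    have : (s⁻¹) ^ 2 < 1 := by
      have h0 : (0:ℝ) < s⁻¹ := by positivity
      nlinarith
    linarith
  have h2 : (1 : ℝ) + t ^ 2 ≠ 0 := by positivity
  have hκ0 : κ ^ 2 ≠ 0 := by nlinarith
  have hs21 : s ^ 2 - 1 = κ ^ 2 * (1 + t ^ 2) := by rw [hs2, hκ2]; ring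
  have eD : -((2 * s)⁻¹ * (κ ^ 2 * (2 * t))) / s ^ 2 = -(κ ^ 2) * t / s ^ 3 := by
    field_simp
  have e0 : 1 - s⁻¹ ^ 2 = (s ^ 2 - 1) / s ^ 2 := by field_simp
  rw [eD, e0]
  have hT1 : (1:ℝ) * s⁻¹ + t * (-(κ ^ 2) * t / s ^ 3) = ρ ^ 2 / s ^ 3 := by
    have h : s ^ 2 - κ ^ 2 * t ^ 2 = ρ ^ 2 := by linarith
    calc (1:ℝ) * s⁻¹ + t * (-(κ ^ 2) * t / s ^ 3)
        = (s ^ 2 - κ ^ 2 * t ^ 2) / s ^ 3 := by field_simp; ring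
      _ = ρ ^ 2 / s ^ 3 := by rw [h]
  have hT2 : t * s⁻¹ * (((s ^ 2 - 1) / s ^ 2)⁻¹ * (-(κ ^ 2) * t / s ^ 3)) =
      -(t ^ 2 / ((1 + t ^ 2) * (ρ ^ 2 + κ ^ 2 * t ^ 2))) := by
    rw [hs21, ← hs2]
    have hκ1 : κ ≠ 0 := fun h => hκ0 (by rw [h]; ring)
    field_simp
  rw [hT1, hT2]
  ring

lemma artanh_nonneg {x : ℝ} (h0 : 0 ≤ x) (h1 : x < 1) : 0 ≤ _root_.artanh x := by
  unfold _root_.artanh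
  have h : (1:ℝ) ≤ (1 + x) / (1 - x) := by
    rw [le_div_iff₀ (by linarith)]; linarith
  have := Real.log_nonneg h
  linarith

lemma artanh_mono {x y : ℝ} (h0 : 0 ≤ x) (hxy : x ≤ y) (h1 : y < 1) :
    _root_.artanh x ≤ _root_.artanh y := by
  unfold _root_.artanh
  have hx1 : x < 1 := lt_of_le_of_lt hxy h1
  have h : (1 + x) / (1 - x) ≤ (1 + y) / (1 - y) := by
    rw [div_le_div_iff₀ (by linarith) (by linarith)]; nlinarith
  have hp : (0:ℝ) < (1 + x) / (1 - x) := div_pos (by linarith) (by linarith)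
  have := Real.log_le_log hp h
  linarith

lemma artanh_le_div {x : ℝ} (h0 : 0 ≤ x) (h1 : x < 1) : _root_.artanh x ≤ x / (1 - x) := by
  unfold _root_.artanh
  have hp : (0:ℝ) < (1 + x) / (1 - x) := div_pos (by linarith) (by linarith)
  have h := Real.log_le_sub_one_of_pos hp
  have hne : 1 - x ≠ 0 := by intro h; linarith [sub_eq_zero.mp h]
  have he : (1 + x) / (1 - x) - 1 = 2 * (x / (1 - x)) := by
    field_simp
    ring
  linarith

lemma continuous_artanh_comp {g : ℝ → ℝ} (hg : Continuous g)
    (h0 : ∀ t, 0 ≤ g t) (h1 : ∀ t, g t < 1) :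
    Continuous fun t => _root_.artanh (g t) := by
  unfold _root_.artanh
  apply Continuous.mul continuous_const
  apply Continuous.log
  · exact (continuous_const.add hg).div (continuous_const.sub hg)
      (fun t => by have := h1 t; intro h; linarith [sub_eq_zero.mp h])
  · intro t
    have h0' := h0 t; have h1' := h1 t
    have : (0:ℝ) < (1 + g t) / (1 - g t) := div_pos (by linarith) (by linarith)
    exact this.ne'

set_option maxHeartbeats 1000000 in
theorem artanh_integration_by_parts (ρ κ : ℝ) (hρ : 1 < ρ)
    (hκ : κ = Real.sqrt (ρ ^ 2 - 1)) :
    ∫ t in Set.Ioi (0:ℝ),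
        (1 / Real.sqrt (ρ ^ 2 + κ ^ 2 * t ^ 2) ^ 3) *
          _root_.artanh (1 / Real.sqrt (ρ ^ 2 + κ ^ 2 * t ^ 2)) =
      (1 / ρ ^ 2) *
        ∫ t in Set.Ioi (0:ℝ), t ^ 2 / ((1 + t ^ 2) * (ρ ^ 2 + κ ^ 2 * t ^ 2)) := by
  have hρ0 : (0:ℝ) < ρ := by linarith
  have hρ1 : (1:ℝ) < ρ ^ 2 := by nlinarith
  have hκ2 : κ ^ 2 = ρ ^ 2 - 1 := by rw [hκ]; exact Real.sq_sqrt (by nlinarith)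
  have hκpos : 0 < κ ^ 2 := by rw [hκ2]; linarith
  have hq : ∀ t : ℝ, 0 < ρ ^ 2 + κ ^ 2 * t ^ 2 := fun t => by
    nlinarith [mul_nonneg hκpos.le (sq_nonneg t)]
  have hq1 : ∀ t : ℝ, 1 < ρ ^ 2 + κ ^ 2 * t ^ 2 := fun t => by
    nlinarith [mul_nonneg hκpos.le (sq_nonneg t)]
  have hqk : ∀ t : ℝ, κ ^ 2 * (1 + t ^ 2) ≤ ρ ^ 2 + κ ^ 2 * t ^ 2 := fun t => by nlinarith
  -- facts about s t = sqrt (ρ² + κ²t²)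
  have hsρ : ∀ t : ℝ, ρ ≤ Real.sqrt (ρ ^ 2 + κ ^ 2 * t ^ 2) := fun t => by
    have h := Real.sqrt_le_sqrt (show ρ ^ 2 ≤ ρ ^ 2 + κ ^ 2 * t ^ 2 by
      nlinarith [mul_nonneg hκpos.le (sq_nonneg t)])
    rwa [Real.sqrt_sq hρ0.le] at h
  have hs1 : ∀ t : ℝ, 1 < Real.sqrt (ρ ^ 2 + κ ^ 2 * t ^ 2) := fun t =>
    lt_of_lt_of_le hρ (hsρ t)
  have hs0 : ∀ t : ℝ, 0 < Real.sqrt (ρ ^ 2 + κ ^ 2 * t ^ 2) := fun t =>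
    lt_trans one_pos (hs1 t)
  have hs2 : ∀ t : ℝ, Real.sqrt (ρ ^ 2 + κ ^ 2 * t ^ 2) ^ 2 = ρ ^ 2 + κ ^ 2 * t ^ 2 :=
    fun t => Real.sq_sqrt (hq t).le
  -- the reciprocal g t = 1 / s t lies in (0,1)
  have hg0 : ∀ t : ℝ, 0 < 1 / Real.sqrt (ρ ^ 2 + κ ^ 2 * t ^ 2) := fun t => by
    positivity
  have hg1 : ∀ t : ℝ, 1 / Real.sqrt (ρ ^ 2 + κ ^ 2 * t ^ 2) < 1 := fun t => by
    rw [div_lt_one (hs0 t)]; exact hs1 t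
  have hgρ : ∀ t : ℝ, 1 / Real.sqrt (ρ ^ 2 + κ ^ 2 * t ^ 2) ≤ 1 / ρ := fun t =>
    one_div_le_one_div_of_le hρ0 (hsρ t)
  have hρinv : 1 / ρ < 1 := by rw [div_lt_one hρ0]; exact hρ
  -- the artanh bound constant
  set c : ℝ := _root_.artanh (1 / ρ) with hc_def
  have hc0 : 0 ≤ c := artanh_nonneg (by positivity) hρinv
  -- continuity of integrands
  have hsc : Continuous fun t : ℝ => Real.sqrt (ρ ^ 2 + κ ^ 2 * t ^ 2) :=
    Real.continuous_sqrt.comp (by continuity)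
  have hgc : Continuous fun t : ℝ => 1 / Real.sqrt (ρ ^ 2 + κ ^ 2 * t ^ 2) :=
    continuous_const.div hsc fun t => (hs0 t).ne'
  have hAc : Continuous fun t : ℝ => _root_.artanh (1 / Real.sqrt (ρ ^ 2 + κ ^ 2 * t ^ 2)) :=
    continuous_artanh_comp hgc (fun t => (hg0 t).le) hg1
  have hf1c : Continuous fun t : ℝ =>
      (1 / Real.sqrt (ρ ^ 2 + κ ^ 2 * t ^ 2) ^ 3) *
        _root_.artanh (1 / Real.sqrt (ρ ^ 2 + κ ^ 2 * t ^ 2)) :=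
    (continuous_const.div (hsc.pow 3) fun t => (pow_pos (hs0 t) 3).ne').mul hAc
  have hf2c : Continuous fun t : ℝ => t ^ 2 / ((1 + t ^ 2) * (ρ ^ 2 + κ ^ 2 * t ^ 2)) := by
    apply Continuous.div (by continuity) (by continuity)
    intro t
    have h1 : (0:ℝ) < 1 + t ^ 2 := by positivity
    exact (mul_pos h1 (hq t)).ne'
  -- integrability of the two integrands
  have hbase : Integrable fun t : ℝ => (c / κ ^ 2 + 1 / κ ^ 2) * (1 + t ^ 2)⁻¹ :=
    integrable_inv_one_add_sq.const_mul _
  have hint1 : IntegrableOn (fun t : ℝ =>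
      (1 / Real.sqrt (ρ ^ 2 + κ ^ 2 * t ^ 2) ^ 3) *
        _root_.artanh (1 / Real.sqrt (ρ ^ 2 + κ ^ 2 * t ^ 2))) (Set.Ioi 0) := by
    refine (hbase.mono' hf1c.aestronglyMeasurable ?_).integrableOn
    refine Filter.Eventually.of_forall fun t => ?_
    set s := Real.sqrt (ρ ^ 2 + κ ^ 2 * t ^ 2) with hs_def
    have h1 : 0 < s := hs0 t
    have hA0 : 0 ≤ _root_.artanh (1 / s) := artanh_nonneg (hg0 t).le (hg1 t)
    have hAle : _root_.artanh (1 / s) ≤ c := artanh_mono (hg0 t).le (hgρ t) hρinv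
    rw [Real.norm_eq_abs, abs_of_nonneg (by positivity)]
    have hss : (1:ℝ) / s ^ 3 ≤ 1 / s ^ 2 := by
      apply one_div_le_one_div_of_le (by positivity)
      nlinarith [hs1 t]
    have hs2q : (1:ℝ) / s ^ 2 ≤ 1 / (κ ^ 2 * (1 + t ^ 2)) := by
      rw [hs2 t]
      exact one_div_le_one_div_of_le (by positivity) (hqk t)
    calc (1 / s ^ 3) * _root_.artanh (1 / s) ≤ (1 / (κ ^ 2 * (1 + t ^ 2))) * c := by
          apply mul_le_mul (le_trans hss hs2q) hAle hA0 (by positivity)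
      _ ≤ (c / κ ^ 2 + 1 / κ ^ 2) * (1 + t ^ 2)⁻¹ := by
          have h2 : (0:ℝ) < 1 + t ^ 2 := by positivity
          have e : (1 / (κ ^ 2 * (1 + t ^ 2))) * c = (c / κ ^ 2) * (1 + t ^ 2)⁻¹ := by
            rw [one_div, mul_inv]; ring
          rw [e, add_mul]
          have hz : (0:ℝ) ≤ 1 / κ ^ 2 * (1 + t ^ 2)⁻¹ := by positivity
          linarith
  have hint2 : IntegrableOn (fun t : ℝ =>
      t ^ 2 / ((1 + t ^ 2) * (ρ ^ 2 + κ ^ 2 * t ^ 2))) (Set.Ioi 0) := by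
    refine (hbase.mono' hf2c.aestronglyMeasurable ?_).integrableOn
    refine Filter.Eventually.of_forall fun t => ?_
    have h2 : (0:ℝ) < 1 + t ^ 2 := by positivity
    rw [Real.norm_eq_abs, abs_of_nonneg (by positivity)]
    have key : t ^ 2 / ((1 + t ^ 2) * (ρ ^ 2 + κ ^ 2 * t ^ 2)) ≤ (1 / κ ^ 2) * (1 + t ^ 2)⁻¹ := by
      rw [div_le_iff₀ (by positivity)]
      have hq' := hq t
      have : (1 / κ ^ 2) * (1 + t ^ 2)⁻¹ * ((1 + t ^ 2) * (ρ ^ 2 + κ ^ 2 * t ^ 2)) =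
          (ρ ^ 2 + κ ^ 2 * t ^ 2) / κ ^ 2 := by
        field_simp
      rw [this, le_div_iff₀ hκpos]
      nlinarith [sq_nonneg t]
    have hpos : (0:ℝ) ≤ c / κ ^ 2 * (1 + t ^ 2)⁻¹ := by positivity
    calc t ^ 2 / ((1 + t ^ 2) * (ρ ^ 2 + κ ^ 2 * t ^ 2))
        ≤ (1 / κ ^ 2) * (1 + t ^ 2)⁻¹ := key
      _ ≤ (c / κ ^ 2 + 1 / κ ^ 2) * (1 + t ^ 2)⁻¹ := by
          rw [add_mul]; linarith [hpos]
  -- the antiderivative F and its limit at infinity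
  set F : ℝ → ℝ := fun u => u * (Real.sqrt (ρ ^ 2 + κ ^ 2 * u ^ 2))⁻¹ *
      _root_.artanh ((Real.sqrt (ρ ^ 2 + κ ^ 2 * u ^ 2))⁻¹) with hF_def
  have hlim : Filter.Tendsto F Filter.atTop (nhds 0) := by
    have hub : ∀ᶠ t : ℝ in Filter.atTop, F t ≤ (1 / ((1 - 1/ρ) * κ ^ 2)) * t⁻¹ := by
      filter_upwards [Filter.eventually_ge_atTop (1:ℝ)] with t ht
      set s := Real.sqrt (ρ ^ 2 + κ ^ 2 * t ^ 2) with hs_def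
      have h1 : 1 < s := hs1 t
      have hσ : 1 - 1/ρ > 0 := by linarith [hρinv]
      have hg1' : (s)⁻¹ < 1 := by rw [inv_lt_one_iff₀]; right; exact h1
      have hg0' : 0 < s⁻¹ := by positivity
      have hA : _root_.artanh s⁻¹ ≤ s⁻¹ / (1 - s⁻¹) := by
        have := artanh_le_div hg0'.le hg1'
        simpa using this
      have hden : 1 - 1/ρ ≤ 1 - s⁻¹ := by
        have h := hgρ t
        simp only [one_div, ← hs_def] at h ⊢
        linarith [h]
      have hA2 : _root_.artanh s⁻¹ ≤ s⁻¹ / (1 - 1/ρ) := by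
        refine le_trans hA ?_
        apply div_le_div_of_nonneg_left hg0'.le hσ hden
      have hF1 : F t ≤ t * s⁻¹ * (s⁻¹ / (1 - 1/ρ)) := by
        simp only [hF_def, ← hs_def]
        apply mul_le_mul_of_nonneg_left hA2
        have : 0 ≤ t := by linarith
        positivity
      refine le_trans hF1 ?_
      have hsq : κ ^ 2 * t ^ 2 ≤ s ^ 2 := by rw [hs2 t]; nlinarith
      have ht0 : (0:ℝ) < t := by linarith
      have hsinv : s⁻¹ * s⁻¹ ≤ 1 / (κ ^ 2 * t ^ 2) := by
        rw [← mul_inv, ← one_div]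
        apply one_div_le_one_div_of_le (by positivity)
        calc κ ^ 2 * t ^ 2 ≤ s ^ 2 := hsq
          _ = s * s := by ring
      calc t * s⁻¹ * (s⁻¹ / (1 - 1/ρ)) = (t * (s⁻¹ * s⁻¹)) / (1 - 1/ρ) := by ring
        _ ≤ (t * (1 / (κ ^ 2 * t ^ 2))) / (1 - 1/ρ) := by
            apply div_le_div_of_nonneg_right ?_ hσ.le
            exact mul_le_mul_of_nonneg_left hsinv ht0.le
        _ = (1 / ((1 - 1/ρ) * κ ^ 2)) * t⁻¹ := by
            have ht' : t ≠ 0 := ht0.ne'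
            have hκ' : κ ^ 2 ≠ 0 := hκpos.ne'
            have hσ' : (1:ℝ) - 1/ρ ≠ 0 := hσ.ne'
            have hρ' : ρ ≠ 0 := hρ0.ne'
            have hρ1' : ρ - 1 ≠ 0 := by intro h; rw [sub_eq_zero] at h; linarith
            field_simp
    have hlb : ∀ᶠ t : ℝ in Filter.atTop, 0 ≤ F t := by
      filter_upwards [Filter.eventually_ge_atTop (0:ℝ)] with t ht
      have hA0 : 0 ≤ _root_.artanh ((Real.sqrt (ρ ^ 2 + κ ^ 2 * t ^ 2))⁻¹) := by
        have := artanh_nonneg (le_of_lt (by positivity : (0:ℝ) < (Real.sqrt (ρ ^ 2 + κ ^ 2 * t ^ 2))⁻¹))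
          (by rw [inv_lt_one_iff₀]; right; exact hs1 t)
        exact this
      have : 0 < Real.sqrt (ρ ^ 2 + κ ^ 2 * t ^ 2) := hs0 t
      simp only [hF_def]
      positivity
    have hg0' : Filter.Tendsto (fun t : ℝ => (1 / ((1 - 1/ρ) * κ ^ 2)) * t⁻¹)
        Filter.atTop (nhds 0) := by
      have := tendsto_inv_atTop_zero.const_mul (1 / ((1 - 1/ρ) * κ ^ 2))
      simpa using this
    exact squeeze_zero' hlb hub hg0'
  -- apply the fundamental theorem of calculus on (0, ∞)
  have hderiv : ∀ x ∈ Set.Ici (0:ℝ), HasDerivAt F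
      (ρ ^ 2 * ((1 / Real.sqrt (ρ ^ 2 + κ ^ 2 * x ^ 2) ^ 3) *
          _root_.artanh (1 / Real.sqrt (ρ ^ 2 + κ ^ 2 * x ^ 2)))
        - x ^ 2 / ((1 + x ^ 2) * (ρ ^ 2 + κ ^ 2 * x ^ 2))) x :=
    fun x _ => main_hasDerivAt ρ κ hρ hκ2 x
  have hintD : IntegrableOn (fun x : ℝ =>
      ρ ^ 2 * ((1 / Real.sqrt (ρ ^ 2 + κ ^ 2 * x ^ 2) ^ 3) *
          _root_.artanh (1 / Real.sqrt (ρ ^ 2 + κ ^ 2 * x ^ 2)))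
        - x ^ 2 / ((1 + x ^ 2) * (ρ ^ 2 + κ ^ 2 * x ^ 2))) (Set.Ioi 0) :=
    (hint1.const_mul _).sub hint2
  have hFTC := MeasureTheory.integral_Ioi_of_hasDerivAt_of_tendsto' hderiv hintD hlim
  have hF0 : F 0 = 0 := by simp [hF_def]
  rw [hF0, sub_zero] at hFTC
  rw [MeasureTheory.integral_sub (hint1.const_mul _) hint2,
    MeasureTheory.integral_const_mul] at hFTC
  have hρ2ne : (ρ:ℝ) ^ 2 ≠ 0 := by positivity
  have hXY : ρ ^ 2 * (∫ t in Set.Ioi (0:ℝ),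
      (1 / Real.sqrt (ρ ^ 2 + κ ^ 2 * t ^ 2) ^ 3) *
        _root_.artanh (1 / Real.sqrt (ρ ^ 2 + κ ^ 2 * t ^ 2))) =
      ∫ t in Set.Ioi (0:ℝ), t ^ 2 / ((1 + t ^ 2) * (ρ ^ 2 + κ ^ 2 * t ^ 2)) := by
    linarith [hFTC]
  rw [← hXY, one_div, inv_mul_cancel_left₀ hρ2ne]
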